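/- arXiv:2211.13646 — 3 statements merged into one kernel-verified Lean document; each statement's English description precedes it below -/
import Mathlib

section
/- Given two codimension-1 subspaces σ, τ of ℝⁿ with unit normals v_σ, v_τ, there exists a rotation O ∈ SO(n) such that O σ = τ, O v_σ = v_τ, and the operator norm ‖O − Id‖ equals |v_σ − v_τ|. -/
/-!
Take `O = R_w ∘ R_v`, the product of the reflections in the hyperplanes `vᗮ` and `wᗮ`, where `w` is
a unit vector on the bisector of `v = v_σ` and `u = v_τ` (any unit vector orthogonal to `v` if
`u = -v`). Then `2 ⟪v, w⟫ w = v + u`, so `O v = u`; `O` has determinant `(-1)² = 1` and, being an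
isometry, maps `vᗮ` onto `(O v)ᗮ`. On the plane spanned by `v, w` it is a rotation and on its
orthogonal complement the identity, so `‖O - Id‖` is attained at `v`: explicitly
`‖O x - x‖² = 4 (⟪v, x⟫² + ⟪w, x⟫² - 2 ⟪v, w⟫ ⟪v, x⟫ ⟪w, x⟫) ≤ 4 (1 - ⟪v, w⟫²) ‖x‖² = ‖O v - v‖² ‖x‖²`.
-/

open Submodule Module RealInnerProductSpace

section Hyperplanes

variable {F : Type*} [NormedAddCommGroup F] [InnerProductSpace ℝ F]

theorem reflection_orthogonal_singleton_apply_of_norm_eq_one {v : F} (hv : ‖v‖ = 1) (x : F) :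
    reflection (ℝ ∙ v)ᗮ x = x - (2 * ⟪v, x⟫) • v := by
  rw [reflection_orthogonal_apply, reflection_singleton_apply, hv]
  simp only [RCLike.ofReal_real_eq_id, id_eq]
  module

theorem LinearIsometryEquiv.map_orthogonal_span_singleton (O : F ≃ₗᵢ[ℝ] F) (v : F) :
    (ℝ ∙ v)ᗮ.map (O.toLinearEquiv : F →ₗ[ℝ] F) = (ℝ ∙ O v)ᗮ := by
  rw [map_orthogonal_equiv, map_span, Set.image_singleton]
  rfl

theorem exists_norm_eq_one_inner_eq_zero [FiniteDimensional ℝ F] (hF : 2 ≤ finrank ℝ F) (v : F) :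
    ∃ w : F, ‖w‖ = 1 ∧ ⟪v, w⟫ = 0 := by
  have : Nontrivial (ℝ ∙ v)ᗮ := by
    apply nontrivial_of_finrank_pos (R := ℝ)
    have := (ℝ ∙ v).finrank_add_finrank_orthogonal
    have := finrank_span_le_card (R := ℝ) ({v} : Set F)
    simp only [Set.toFinset_singleton, Finset.card_singleton] at this
    omega
  obtain ⟨p, hp⟩ := exists_ne (0 : (ℝ ∙ v)ᗮ)
  refine ⟨‖(p : F)‖⁻¹ • (p : F), norm_smul_inv_norm (by simpa using hp), ?_⟩
  rw [real_inner_smul_right, mem_orthogonal_singleton_iff_inner_right.mp p.2, mul_zero]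

theorem exists_norm_eq_one_two_inner_smul_eq_add [FiniteDimensional ℝ F] (hF : 2 ≤ finrank ℝ F)
    {v u : F} (hv : ‖v‖ = 1) (hu : ‖u‖ = 1) : ∃ w : F, ‖w‖ = 1 ∧ (2 * ⟪v, w⟫) • w = v + u := by
  by_cases hvu : v + u = 0
  · obtain ⟨w, hw, hvw⟩ := exists_norm_eq_one_inner_eq_zero hF v
    exact ⟨w, hw, by rw [hvw, hvu, mul_zero, zero_smul]⟩
  · have hnorm : ‖v + u‖ ^ 2 = 2 * ⟪v, v + u⟫ := by
      rw [norm_add_sq_real, inner_add_right, real_inner_self_eq_norm_sq, hv, hu]; ring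
    refine ⟨‖v + u‖⁻¹ • (v + u), norm_smul_inv_norm hvu, ?_⟩
    rw [real_inner_smul_right, smul_smul]
    have : ‖v + u‖ ≠ 0 := norm_ne_zero_iff.mpr hvu
    convert one_smul ℝ (v + u) using 2
    field_simp
    linarith

noncomputable def doubleReflection (v w : F) : F ≃ₗᵢ[ℝ] F :=
  (reflection (ℝ ∙ v)ᗮ).trans (reflection (ℝ ∙ w)ᗮ)

variable {v w : F}

theorem doubleReflection_apply (hv : ‖v‖ = 1) (hw : ‖w‖ = 1) (x : F) :
    doubleReflection v w x =
      x - (2 * ⟪v, x⟫) • v - (2 * (⟪w, x⟫ - 2 * ⟪v, w⟫ * ⟪v, x⟫)) • w := by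
  change reflection (ℝ ∙ w)ᗮ (reflection (ℝ ∙ v)ᗮ x) = _
  rw [reflection_orthogonal_singleton_apply_of_norm_eq_one hv,
    reflection_orthogonal_singleton_apply_of_norm_eq_one hw,
    inner_sub_right, real_inner_smul_right, real_inner_comm w v]
  module

theorem doubleReflection_apply_self (hv : ‖v‖ = 1) (hw : ‖w‖ = 1) :
    doubleReflection v w v = (2 * ⟪v, w⟫) • w - v := by
  rw [doubleReflection_apply hv hw, real_inner_self_eq_norm_sq, hv, real_inner_comm w v]
  module

theorem norm_doubleReflection_apply_sub_sq (hv : ‖v‖ = 1) (hw : ‖w‖ = 1) (x : F) :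
    ‖doubleReflection v w x - x‖ ^ 2 =
      4 * (⟪v, x⟫ ^ 2 + ⟪w, x⟫ ^ 2 - 2 * ⟪v, w⟫ * ⟪v, x⟫ * ⟪w, x⟫) := by
  set a := 2 * ⟪v, x⟫ with ha
  set b := 2 * (⟪w, x⟫ - 2 * ⟪v, w⟫ * ⟪v, x⟫) with hb
  have hsub : doubleReflection v w x - x = -(a • v + b • w) := by
    rw [doubleReflection_apply hv hw]; module
  rw [hsub, norm_neg, norm_add_sq_real, norm_smul, norm_smul, real_inner_smul_left,
    real_inner_smul_right, hv, hw, Real.norm_eq_abs, Real.norm_eq_abs, mul_one, mul_one,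
    sq_abs, sq_abs, ha, hb]
  ring

/-- The Gram determinant of `v, w, x` is nonnegative; after projecting `w` and `x` onto `vᗮ` this
is Cauchy–Schwarz. -/
theorem inner_sq_add_inner_sq_sub_le (hv : ‖v‖ = 1) (hw : ‖w‖ = 1) (x : F) :
    ⟪v, x⟫ ^ 2 + ⟪w, x⟫ ^ 2 - 2 * ⟪v, w⟫ * ⟪v, x⟫ * ⟪w, x⟫ ≤ (1 - ⟪v, w⟫ ^ 2) * ‖x‖ ^ 2 := by
  have hvv : ⟪v, v⟫ = 1 := by rw [real_inner_self_eq_norm_sq, hv, one_pow]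
  have hww : ⟪w, w⟫ = 1 := by rw [real_inner_self_eq_norm_sq, hw, one_pow]
  have hcs := real_inner_mul_inner_self_le (w - ⟪v, w⟫ • v) (x - ⟪v, x⟫ • v)
  simp only [inner_sub_left, inner_sub_right, real_inner_smul_left, real_inner_smul_right,
    hvv, hww, real_inner_comm v w, real_inner_comm v x] at hcs
  rw [← real_inner_self_eq_norm_sq]
  linarith [hcs]

theorem norm_doubleReflection_apply_sub_le (hv : ‖v‖ = 1) (hw : ‖w‖ = 1) (x : F) :
    ‖doubleReflection v w x - x‖ ≤ ‖doubleReflection v w v - v‖ * ‖x‖ := by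
  refine le_of_sq_le_sq ?_ (by positivity)
  rw [mul_pow, norm_doubleReflection_apply_sub_sq hv hw, norm_doubleReflection_apply_sub_sq hv hw,
    real_inner_self_eq_norm_sq, hv, real_inner_comm v w]
  linarith [inner_sq_add_inner_sq_sub_le hv hw x]

theorem norm_doubleReflection_sub_id (hv : ‖v‖ = 1) (hw : ‖w‖ = 1) :
    ‖((doubleReflection v w).toLinearIsometry.toContinuousLinearMap : F →L[ℝ] F) -
        ContinuousLinearMap.id ℝ F‖ = ‖doubleReflection v w v - v‖ := by
  refine le_antisymm (ContinuousLinearMap.opNorm_le_bound _ (norm_nonneg _) fun x => ?_) ?_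
  · exact norm_doubleReflection_apply_sub_le hv hw x
  · simpa using ContinuousLinearMap.unit_le_opNorm
      (((doubleReflection v w).toLinearIsometry.toContinuousLinearMap : F →L[ℝ] F) -
        ContinuousLinearMap.id ℝ F) v hv.le

theorem det_doubleReflection [FiniteDimensional ℝ F] (hv : v ≠ 0) (hw : w ≠ 0) :
    LinearMap.det ((doubleReflection v w).toLinearEquiv : F →ₗ[ℝ] F) = 1 := by
  have det_reflection_hyperplane {u : F} (hu : u ≠ 0) :
      LinearMap.det ((reflection (ℝ ∙ u)ᗮ).toLinearEquiv : F →ₗ[ℝ] F) = -1 := by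
    rw [det_reflection, orthogonal_orthogonal, finrank_span_singleton hu, pow_one]
  change LinearMap.det (((reflection (ℝ ∙ w)ᗮ).toLinearEquiv : F →ₗ[ℝ] F) ∘ₗ
    ((reflection (ℝ ∙ v)ᗮ).toLinearEquiv : F →ₗ[ℝ] F)) = 1
  rw [LinearMap.det_comp, det_reflection_hyperplane hv, det_reflection_hyperplane hw]
  norm_num

end Hyperplanes

/-- Given two codimension-1 subspaces σ, τ of ℝⁿ with unit normals v_σ, v_τ,
there is a rotation O ∈ SO(n) with O σ = τ, O v_σ = v_τ and ‖O − Id‖ = ‖v_σ − v_τ‖. -/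
theorem stmt_1 (n : ℕ) (hn : 2 ≤ n)
    (σ τ : Submodule ℝ (EuclideanSpace ℝ (Fin n)))
    (vσ vτ : EuclideanSpace ℝ (Fin n))
    (hvσ : ‖vσ‖ = 1) (hvτ : ‖vτ‖ = 1)
    (hσ : σ = (Submodule.span ℝ {vσ})ᗮ) (hτ : τ = (Submodule.span ℝ {vτ})ᗮ) :
    ∃ O : EuclideanSpace ℝ (Fin n) ≃ₗᵢ[ℝ] EuclideanSpace ℝ (Fin n),
      LinearMap.det (O.toLinearEquiv : EuclideanSpace ℝ (Fin n) →ₗ[ℝ] EuclideanSpace ℝ (Fin n)) = 1 ∧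
      σ.map (O.toLinearEquiv : EuclideanSpace ℝ (Fin n) →ₗ[ℝ] EuclideanSpace ℝ (Fin n)) = τ ∧
      O vσ = vτ ∧
      ‖(O.toLinearIsometry.toContinuousLinearMap :
          EuclideanSpace ℝ (Fin n) →L[ℝ] EuclideanSpace ℝ (Fin n))
        - ContinuousLinearMap.id ℝ (EuclideanSpace ℝ (Fin n))‖ = ‖vσ - vτ‖ := by
  subst hσ hτ
  obtain ⟨w, hw, hvσw⟩ :=
    exists_norm_eq_one_two_inner_smul_eq_add (by rwa [finrank_euclideanSpace_fin]) hvσ hvτ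
  have hO : doubleReflection vσ w vσ = vτ := by
    rw [doubleReflection_apply_self hvσ hw, hvσw, add_sub_cancel_left]
  refine ⟨doubleReflection vσ w, det_doubleReflection (norm_ne_zero_iff.mp (by simp [hvσ]))
    (norm_ne_zero_iff.mp (by simp [hw])), ?_, hO, ?_⟩
  · rw [LinearIsometryEquiv.map_orthogonal_span_singleton, hO]
  · rw [norm_doubleReflection_sub_id hvσ hw, hO, norm_sub_rev]
end

section
/- For a codimension-1 subspace σ of ℝⁿ with unit normal v_σ satisfying v_σ ≠ ±e_n, set U_σ := (e_n − ⟨v_σ, e_n⟩ v_σ)/√(1 − ⟨v_σ, e_n⟩²) and u_σ := (⟨v_σ,e_n⟩ e_n − v_σ)/|⟨v_σ,e_n⟩ e_n − v_σ|. Then U_σ is a unit vector lying in σ ∩ span{v_σ, e_n}, u_σ is a unit vector lying in e_n^⊥ ∩ span{v_σ, e_n}, and for the rotation O_σ ∈ SO(n) which is the identity on σ ∩ e_n^⊥ and maps U_σ to u_σ (and v_σ to e_n), the following projection identity holds for all ξ ∈ ℝⁿ: O_σ Π_σ ξ = Π_{e_n^⊥} ξ + (⟨v_σ, e_n⟩ −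 1)·⟨ξ, u_σ⟩·u_σ + ⟨ξ, e_n⟩·(⟨v_σ,e_n⟩ e_n − v_σ). -/
open scoped RealInnerProductSpace

/-- The last standard basis vector e_n of ℝ^{n+1}. -/
noncomputable def eVec (n : ℕ) : EuclideanSpace ℝ (Fin (n + 1)) :=
  EuclideanSpace.single (Fin.last n) (1 : ℝ)

/-!
Write `c = ⟪v_σ, e_n⟫` and `x = c e_n − v_σ`, so that `⟪ξ, u_σ⟫ u_σ` is the projection of `ξ`
onto `ℝ x` and `O_σ U_σ = u_σ` says `O_σ (e_n − c v_σ) = x`. Both sides of the identity are then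
linear in `ξ`, so it suffices to compare them on `span {v_σ, e_n}` and on its orthogonal
complement `σ ∩ e_n^⊥`. On the complement both sides are the identity; on the plane both sides
vanish at `v_σ` and both send `e_n` to `x`.
-/

open Submodule

section
variable {𝕜 E F : Type*} [RCLike 𝕜] [NormedAddCommGroup E] [InnerProductSpace 𝕜 E]

theorem ContinuousLinearMap.ext_of_eqOn_of_eqOn_orthogonal [AddCommMonoid F] [Module 𝕜 F]
    [TopologicalSpace F] (K : Submodule 𝕜 E) [K.HasOrthogonalProjection] {f g : E →L[𝕜] F}
    (hK : Set.EqOn f g K) (hKperp : Set.EqOn f g Kᗮ) : f = g := by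
  ext x
  rw [← K.starProjection_add_starProjection_orthogonal x, map_add, map_add,
    hK (K.starProjection_apply_mem x), hKperp (Kᗮ.starProjection_apply_mem x)]

theorem starProjection_orthogonal_unit_singleton {v : E} (hv : ‖v‖ = 1) (x : E) :
    (𝕜 ∙ v)ᗮ.starProjection x = x - inner 𝕜 v x • v := by
  rw [starProjection_orthogonal_val, starProjection_unit_singleton 𝕜 hv]

end

section
variable {E : Type*} [NormedAddCommGroup E] [InnerProductSpace ℝ E]

theorem norm_sub_real_inner_smul {v : E} (hv : ‖v‖ = 1) (x : E) :
    ‖x - ⟪v, x⟫ • v‖ = √(‖x‖ ^ 2 - ⟪v, x⟫ ^ 2) := by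
  rw [← Real.sqrt_sq (norm_nonneg _), @norm_sub_sq_real, norm_smul, real_inner_smul_right,
    real_inner_comm x v, hv, Real.norm_eq_abs, mul_one, sq_abs]
  ring_nf

theorem real_inner_sq_lt_one_of_ne_of_ne_neg {v e : E} (hv : ‖v‖ = 1) (he : ‖e‖ = 1)
    (hne : v ≠ e) (hne' : v ≠ -e) : ⟪v, e⟫ ^ 2 < 1 := by
  have hle : |⟪v, e⟫| ≤ 1 := by simpa [hv, he] using abs_real_inner_le_norm v e
  have h1 : ⟪v, e⟫ ≠ 1 := fun h => hne ((inner_eq_one_iff_of_norm_eq_one hv he).1 h)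
  have h2 : ⟪v, e⟫ ≠ -1 := fun h => hne' ((inner_eq_neg_one_iff_of_norm_eq_one hv he).1 h)
  obtain ⟨hlo, hhi⟩ := abs_le.1 hle
  exact (sq_lt_one_iff_abs_lt_one _).2 (abs_lt.2 ⟨lt_of_le_of_ne hlo h2.symm, lt_of_le_of_ne hhi h1⟩)

theorem starProjection_singleton_eq_inner_inv_norm_smul (x ξ : E) :
    (ℝ ∙ x).starProjection ξ = ⟪ξ, ‖x‖⁻¹ • x⟫ • (‖x‖⁻¹ • x) := by
  rw [starProjection_singleton, real_inner_smul_right, smul_smul, real_inner_comm]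
  congr 1
  simp only [RCLike.ofReal_real_eq_id, id]
  field_simp

theorem apply_starProjection_orthogonal_singleton {v e : E} (hv : ‖v‖ = 1) (he : ‖e‖ = 1)
    (T : E →L[ℝ] E) (hfix : ∀ w ∈ (ℝ ∙ v)ᗮ ⊓ (ℝ ∙ e)ᗮ, T w = w)
    (hT : T (e - ⟪v, e⟫ • v) = ⟪v, e⟫ • e - v) (ξ : E) :
    T ((ℝ ∙ v)ᗮ.starProjection ξ) = (ℝ ∙ e)ᗮ.starProjection ξ
      + (⟪v, e⟫ - 1) • (ℝ ∙ (⟪v, e⟫ • e - v)).starProjection ξ + ⟪ξ, e⟫ • (⟪v, e⟫ • e - v) := by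
  set c := ⟪v, e⟫
  set x := c • e - v
  have hee : ⟪e, e⟫ = 1 := by rw [real_inner_self_eq_norm_sq, he, one_pow]
  have hxe : (ℝ ∙ x).starProjection e = 0 := by
    rw [starProjection_apply_eq_zero_iff, mem_orthogonal_singleton_iff_inner_right, inner_sub_left,
      real_inner_smul_left, hee, mul_one, sub_self]
  have : FiniteDimensional ℝ (span ℝ {v, e}) := .span_of_finite ℝ (Set.toFinite _)
  have key : T ∘L (ℝ ∙ v)ᗮ.starProjection = (ℝ ∙ e)ᗮ.starProjection
      + (c - 1) • (ℝ ∙ x).starProjection + (innerSL ℝ e).smulRight x := by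
    refine ContinuousLinearMap.ext_of_eqOn_of_eqOn_orthogonal (span ℝ {v, e}) ?_ ?_
    · refine LinearMap.eqOn_span' (f := (T ∘L (ℝ ∙ v)ᗮ.starProjection).toLinearMap) ?_
      intro y hy
      rcases (by simpa only [Set.mem_insert_iff, Set.mem_singleton_iff] using hy : y = v ∨ y = e)
        with h | h <;> rw [h] <;>
        simp only [ContinuousLinearMap.coe_coe, ContinuousLinearMap.comp_apply, add_apply,
          smul_apply, ContinuousLinearMap.smulRight_apply, innerSL_apply_apply,
          starProjection_orthogonal_unit_singleton hv, starProjection_orthogonal_unit_singleton he]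
      · have hxv : (ℝ ∙ x).starProjection v = -x := by
          rw [← sub_sub_cancel (c • e) v, map_sub, map_smul, hxe,
            starProjection_eq_self_iff.2 (mem_span_singleton_self _), smul_zero, zero_sub]
        rw [hxv, real_inner_self_eq_norm_sq, hv, one_pow, one_smul, sub_self, map_zero,
          real_inner_comm v e]
        simp only [x]
        module
      · rw [hT, hxe, hee]
        module
    · intro w hw
      rw [span_insert, ← inf_orthogonal] at hw
      obtain ⟨hvw, hew⟩ := hw
      have hxw : (ℝ ∙ x).starProjection w = 0 := by
        rw [starProjection_apply_eq_zero_iff, mem_orthogonal_singleton_iff_inner_right,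
          inner_sub_left, real_inner_smul_left, mem_orthogonal_singleton_iff_inner_right.1 hvw,
          mem_orthogonal_singleton_iff_inner_right.1 hew, mul_zero, sub_zero]
      simp only [ContinuousLinearMap.comp_apply, add_apply, smul_apply,
        ContinuousLinearMap.smulRight_apply, innerSL_apply_apply,
        starProjection_eq_self_iff.2 hvw, starProjection_eq_self_iff.2 hew,
        hfix w ⟨hvw, hew⟩, hxw, mem_orthogonal_singleton_iff_inner_right.1 hew, smul_zero,
        zero_smul, add_zero]
  simpa [real_inner_comm] using congr($key ξ)

end

theorem stmt_4_general (n : ℕ)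
    (vσ : EuclideanSpace ℝ (Fin (n + 1))) (hvσ : ‖vσ‖ = 1)
    (hne : vσ ≠ eVec n) (hne' : vσ ≠ -eVec n)
    (σ : Submodule ℝ (EuclideanSpace ℝ (Fin (n + 1))))
    (hσ : σ = (Submodule.span ℝ {vσ})ᗮ)
    (Uσ uσ : EuclideanSpace ℝ (Fin (n + 1)))
    (hU : Uσ = (Real.sqrt (1 - ⟪vσ, eVec n⟫ ^ 2))⁻¹ • (eVec n - ⟪vσ, eVec n⟫ • vσ))
    (hu : uσ = ‖⟪vσ, eVec n⟫ • eVec n - vσ‖⁻¹ • (⟪vσ, eVec n⟫ • eVec n - vσ))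
    (O : EuclideanSpace ℝ (Fin (n + 1)) ≃ₗᵢ[ℝ] EuclideanSpace ℝ (Fin (n + 1)))
    (hfix : ∀ w ∈ σ ⊓ (Submodule.span ℝ {eVec n})ᗮ, O w = w)
    (hOU : O Uσ = uσ) :
    ‖Uσ‖ = 1 ∧ Uσ ∈ σ ⊓ Submodule.span ℝ {vσ, eVec n} ∧
    ‖uσ‖ = 1 ∧ uσ ∈ (Submodule.span ℝ {eVec n})ᗮ ⊓ Submodule.span ℝ {vσ, eVec n} ∧
    ∀ ξ : EuclideanSpace ℝ (Fin (n + 1)),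
      O (Submodule.orthogonalProjectionOnto σ ξ : EuclideanSpace ℝ (Fin (n + 1)))
        = (Submodule.orthogonalProjectionOnto ((Submodule.span ℝ {eVec n})ᗮ) ξ :
            EuclideanSpace ℝ (Fin (n + 1)))
          + (⟪vσ, eVec n⟫ - 1) • (⟪ξ, uσ⟫ • uσ)
          + ⟪ξ, eVec n⟫ • (⟪vσ, eVec n⟫ • eVec n - vσ) := by
  have he : ‖eVec n‖ = 1 := by simp [eVec]
  subst hσ hU hu
  set e := eVec n
  have hUnorm : ‖e - ⟪vσ, e⟫ • vσ‖ = √(1 - ⟪vσ, e⟫ ^ 2) := by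
    rw [norm_sub_real_inner_smul hvσ, he, one_pow]
  have hunorm : ‖⟪vσ, e⟫ • e - vσ‖ = √(1 - ⟪vσ, e⟫ ^ 2) := by
    rw [← norm_neg, neg_sub, real_inner_comm e vσ, norm_sub_real_inner_smul he, hvσ, one_pow]
  have hs : √(1 - ⟪vσ, e⟫ ^ 2) ≠ 0 :=
    (Real.sqrt_pos.2 (sub_pos.2 (real_inner_sq_lt_one_of_ne_of_ne_neg hvσ he hne hne'))).ne'
  have hO : O (e - ⟪vσ, e⟫ • vσ) = ⟪vσ, e⟫ • e - vσ :=
    smul_right_injective _ (inv_ne_zero hs) (by dsimp only; rw [← map_smul, hOU, hunorm])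
  rw [← hUnorm]
  refine ⟨norm_smul_inv_norm (norm_ne_zero_iff.1 (hUnorm ▸ hs)), ⟨?_, ?_⟩,
    norm_smul_inv_norm (norm_ne_zero_iff.1 (hunorm ▸ hs)), ⟨?_, ?_⟩, fun ξ => ?_⟩
  · exact smul_mem _ _ (by
      rw [← starProjection_orthogonal_unit_singleton hvσ]; exact starProjection_apply_mem _ _)
  · exact smul_mem _ _ (sub_mem (subset_span (by simp)) (smul_mem _ _ (subset_span (by simp))))
  · exact smul_mem _ _ (by
      rw [← neg_sub, real_inner_comm e vσ, ← starProjection_orthogonal_unit_singleton he]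
      exact neg_mem (starProjection_apply_mem _ _))
  · exact smul_mem _ _ (sub_mem (smul_mem _ _ (subset_span (by simp))) (subset_span (by simp)))
  · rw [coe_orthogonalProjectionOnto_apply, coe_orthogonalProjectionOnto_apply,
      ← starProjection_singleton_eq_inner_inv_norm_smul]
    exact apply_starProjection_orthogonal_singleton hvσ he O hfix hO ξ

/-- with U_σ, u_σ the distinguished unit vectors in σ ∩ span{v_σ,e_n}
and e_n^⊥ ∩ span{v_σ,e_n}, and O_σ the rotation fixing σ ∩ e_n^⊥ with O_σ U_σ = u_σ,
O_σ v_σ = e_n, one has O_σ Π_σ ξ = Π_{e_n^⊥} ξ + (⟨v_σ,e_n⟩−1)⟨ξ,u_σ⟩u_σ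
+ ⟨ξ,e_n⟩(⟨v_σ,e_n⟩e_n − v_σ). -/
theorem stmt_4 (n : ℕ) (hn : 1 ≤ n)
    (vσ : EuclideanSpace ℝ (Fin (n + 1))) (hvσ : ‖vσ‖ = 1)
    (hne : vσ ≠ eVec n) (hne' : vσ ≠ -eVec n)
    (σ : Submodule ℝ (EuclideanSpace ℝ (Fin (n + 1))))
    (hσ : σ = (Submodule.span ℝ {vσ})ᗮ)
    (Uσ uσ : EuclideanSpace ℝ (Fin (n + 1)))
    (hU : Uσ = (Real.sqrt (1 - ⟪vσ, eVec n⟫ ^ 2))⁻¹ • (eVec n - ⟪vσ, eVec n⟫ • vσ))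
    (hu : uσ = ‖⟪vσ, eVec n⟫ • eVec n - vσ‖⁻¹ • (⟪vσ, eVec n⟫ • eVec n - vσ))
    (O : EuclideanSpace ℝ (Fin (n + 1)) ≃ₗᵢ[ℝ] EuclideanSpace ℝ (Fin (n + 1)))
    (hfix : ∀ w ∈ σ ⊓ (Submodule.span ℝ {eVec n})ᗮ, O w = w)
    (hOU : O Uσ = uσ) (hOv : O vσ = eVec n) :
    ‖Uσ‖ = 1 ∧ Uσ ∈ σ ⊓ Submodule.span ℝ {vσ, eVec n} ∧
    ‖uσ‖ = 1 ∧ uσ ∈ (Submodule.span ℝ {eVec n})ᗮ ⊓ Submodule.span ℝ {vσ, eVec n} ∧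
    ∀ ξ : EuclideanSpace ℝ (Fin (n + 1)),
      O (Submodule.orthogonalProjectionOnto σ ξ : EuclideanSpace ℝ (Fin (n + 1)))
        = (Submodule.orthogonalProjectionOnto ((Submodule.span ℝ {eVec n})ᗮ) ξ :
            EuclideanSpace ℝ (Fin (n + 1)))
          + (⟪vσ, eVec n⟫ - 1) • (⟪ξ, uσ⟫ • uσ)
          + ⟪ξ, eVec n⟫ • (⟪vσ, eVec n⟫ • eVec n - vσ) :=
  stmt_4_general n vσ hvσ hne hne' σ hσ Uσ uσ hU hu O hfix hOU
end

section
/- Let R and R' be axis-parallel rectangles in ℝⁿ with R' ⊂ ℝⁿ, and suppose φ, φ' ∈ L²(ℝⁿ) satisfy |φ(x)| ≤ |R|^{−1/2}(1+ρ_R(x))^{−M} and |φ'(x)| ≤ |R'|^{−1/2}(1+ρ_{R'}(x))^{−M} with M > 2n, where each side length of R' is at least the corresponding side length of R and R ∩ R' = ∅. Then |⟨φ, φ'⟩| ≲_{M,n} (|R|/|R'|)^{1/2} · inf_{x ∈ R} (1 + ρ_{R'}(x))^{−M+n}. -/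
open MeasureTheory
open scoped ENNReal

/-- ρ_R(x) for the rectangle R with center c and half-widths w:
the least dilation factor r with x ∈ rR. -/
noncomputable def rhoRect {n : ℕ} (c w : Fin n → ℝ) (x : EuclideanSpace ℝ (Fin n)) : ℝ :=
  ⨆ i, |x i - c i| / w i

section aux

variable {n : ℕ} (c w : Fin n → ℝ)

lemma rhoRect_coord_le [Nonempty (Fin n)] (hw : ∀ i, 0 < w i)
    (x : EuclideanSpace ℝ (Fin n)) (i : Fin n) :
    |x i - c i| ≤ rhoRect c w x * w i := by
  have h : |x i - c i| / w i ≤ rhoRect c w x := by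
    rw [rhoRect]
    exact le_ciSup (f := fun j => |x j - c j| / w j)
      (Set.Finite.bddAbove (Set.finite_range _)) i
  exact (div_le_iff₀ (hw i)).mp h

lemma rhoRect_nonneg [Nonempty (Fin n)] (hw : ∀ i, 0 < w i)
    (x : EuclideanSpace ℝ (Fin n)) : 0 ≤ rhoRect c w x := by
  obtain ⟨i⟩ := (inferInstance : Nonempty (Fin n))
  have h := rhoRect_coord_le c w hw x i
  nlinarith [abs_nonneg (x i - c i), hw i]

lemma rhoRect_le_iff [Nonempty (Fin n)] (hw : ∀ i, 0 < w i)
    (x : EuclideanSpace ℝ (Fin n)) (r : ℝ) :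
    rhoRect c w x ≤ r ↔ ∀ i, |x i - c i| ≤ r * w i := by
  constructor
  · intro h i
    have := (rhoRect_coord_le c w hw x i)
    exact this.trans (mul_le_mul_of_nonneg_right h (hw i).le)
  · intro h
    rw [rhoRect]
    refine ciSup_le fun i => ?_
    rw [div_le_iff₀ (hw i)]
    exact h i

lemma sublevel_eq (hw : ∀ i, 0 < w i) [Nonempty (Fin n)] (r : ℝ) :
    {x : EuclideanSpace ℝ (Fin n) | 1 + rhoRect c w x ≤ r}
      = ⋂ i, {x : EuclideanSpace ℝ (Fin n) | |x i - c i| ≤ (r - 1) * w i} := by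
  ext x
  simp only [Set.mem_setOf_eq, Set.mem_iInter]
  rw [show (1 + rhoRect c w x ≤ r) ↔ rhoRect c w x ≤ r - 1 by constructor <;> intro <;> linarith]
  exact rhoRect_le_iff c w hw x (r - 1)

lemma coord_measurable (i : Fin n) :
    Measurable fun x : EuclideanSpace ℝ (Fin n) => x i := by
  exact (measurable_pi_apply i).comp (MeasurableEquiv.toLp 2 (Fin n → ℝ)).symm.measurable

lemma sublevel_measurable (hw : ∀ i, 0 < w i) [Nonempty (Fin n)] (r : ℝ) :
    MeasurableSet {x : EuclideanSpace ℝ (Fin n) | 1 + rhoRect c w x ≤ r} := by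
  rw [sublevel_eq c w hw r]
  refine MeasurableSet.iInter fun i => ?_
  have : Measurable fun x : EuclideanSpace ℝ (Fin n) => |x i - c i| :=
    ((coord_measurable i).sub measurable_const).abs
  exact measurableSet_le this measurable_const

lemma box_volume (b : Fin n → ℝ) (hb : ∀ i, 0 ≤ b i) :
    volume {x : EuclideanSpace ℝ (Fin n) | ∀ i, |x i - c i| ≤ b i}
      = ENNReal.ofReal (∏ i, (2 * b i)) := by
  have he : {x : EuclideanSpace ℝ (Fin n) | ∀ i, |x i - c i| ≤ b i}
      = (MeasurableEquiv.toLp 2 (Fin n → ℝ)).symm ⁻¹'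
        (Set.univ.pi fun i => Set.Icc (c i - b i) (c i + b i)) := by
    ext x
    simp only [Set.mem_setOf_eq, Set.mem_preimage, Set.mem_pi, Set.mem_univ, true_implies,
      Set.mem_Icc, MeasurableEquiv.toLp_symm_apply]
    constructor
    · intro h i
      have := abs_le.mp (h i); constructor <;> [linarith [this.1]; linarith [this.2]]
    · intro h i
      rw [abs_le]; have := h i; constructor <;> [linarith [this.1]; linarith [this.2]]
  rw [he, (EuclideanSpace.volume_preserving_symm_measurableEquiv_toLp (Fin n)).measure_preimage
    (MeasurableSet.univ_pi fun i => measurableSet_Icc).nullMeasurableSet]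
  rw [volume_pi_pi, ENNReal.ofReal_prod_of_nonneg (fun i _ => mul_nonneg (by norm_num) (hb i))]
  congr 1
  ext i
  rw [Real.volume_Icc]
  congr 1
  ring

lemma sublevel_volume (hw : ∀ i, 0 < w i) [Nonempty (Fin n)] (r : ℝ) (hr : 1 ≤ r) :
    volume {x : EuclideanSpace ℝ (Fin n) | 1 + rhoRect c w x ≤ r}
      ≤ ENNReal.ofReal ((∏ i, (2 * w i)) * r ^ (n : ℝ)) := by
  have h1 : {x : EuclideanSpace ℝ (Fin n) | 1 + rhoRect c w x ≤ r}
      = {x : EuclideanSpace ℝ (Fin n) | ∀ i, |x i - c i| ≤ (r - 1) * w i} := by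
    rw [sublevel_eq c w hw r]; ext x; simp [Set.mem_iInter]
  rw [h1, box_volume c _ (fun i => mul_nonneg (by linarith) (hw i).le)]
  refine ENNReal.ofReal_le_ofReal ?_
  have hprod : (∏ i, (2 * ((r - 1) * w i))) = (r - 1) ^ n * ∏ i, (2 * w i) := by
    rw [show (fun i => 2 * ((r - 1) * w i)) = fun i => (r - 1) * (2 * w i) by funext i; ring]
    rw [Finset.prod_mul_distrib, Finset.prod_const, Finset.card_univ, Fintype.card_fin]
  rw [hprod]
  have hV : (0:ℝ) ≤ ∏ i, (2 * w i) := Finset.prod_nonneg fun i _ => by have := hw i; positivity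
  have h2 : (r - 1) ^ n ≤ r ^ (n : ℝ) := by
    rw [Real.rpow_natCast]
    exact pow_le_pow_left₀ (by linarith) (by linarith) n
  calc (r - 1) ^ n * ∏ i, (2 * w i) ≤ r ^ (n:ℝ) * ∏ i, (2 * w i) :=
        mul_le_mul_of_nonneg_right h2 hV
  _ = (∏ i, (2 * w i)) * r ^ (n:ℝ) := mul_comm _ _

end aux

section dyadic

variable {α : Type*} [MeasurableSpace α] (μ : Measure α)

/-- Dyadic majorant of `f^(-M)` restricted to `{s ≤ f}`. -/
noncomputable def dyadicSum (f : α → ℝ) (M s : ℝ) (x : α) : ℝ≥0∞ :=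
  ∑' k : ℕ, ({y | f y ≤ s * 2 ^ (k + 1)}).indicator
    (fun _ => ENNReal.ofReal ((s * 2 ^ k) ^ (-M))) x

lemma dyadicSum_measurable (f : α → ℝ) (M s : ℝ)
    (hmeas : ∀ r : ℝ, MeasurableSet {y | f y ≤ r}) :
    Measurable (dyadicSum f M s) :=
  Measurable.ennreal_tsum fun _ => measurable_const.indicator (hmeas _)

lemma dyadicSum_pointwise (f : α → ℝ) (M s : ℝ) (hs : 1 ≤ s) (hM : 0 ≤ M)
    (x : α) :
    ENNReal.ofReal (if s ≤ f x then f x ^ (-M) else 0) ≤ dyadicSum f M s x := by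
  by_cases hx : s ≤ f x
  · rw [if_pos hx]
    have hex : ∃ k : ℕ, f x ≤ s * 2 ^ (k + 1) := by
      obtain ⟨m, hm⟩ := exists_nat_gt (f x)
      refine ⟨m, le_trans hm.le ?_⟩
      have h1 : (m : ℝ) ≤ 2 ^ m := by
        exact_mod_cast (Nat.lt_two_pow_self (n := m)).le
      have h2 : (2:ℝ) ^ m ≤ 2 ^ (m + 1) := by
        apply pow_le_pow_right₀ one_le_two; omega
      nlinarith [pow_pos (show (0:ℝ) < 2 by norm_num) (m + 1)]
    set k := Nat.find hex with hk
    have hk2 : f x ≤ s * 2 ^ (k + 1) := Nat.find_spec hex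
    have hk1 : s * 2 ^ k ≤ f x := by
      rcases Nat.eq_zero_or_pos k with h0 | hpos
      · rw [h0]; simpa using hx
      · obtain ⟨j, hj⟩ := Nat.exists_eq_succ_of_ne_zero hpos.ne'
        have hmin := Nat.find_min hex (show j < k by omega)
        push_neg at hmin
        have hlt : s * 2 ^ (j + 1) < f x := by simpa using hmin
        rw [hj]
        exact hlt.le
    have hpos : (0:ℝ) < s * 2 ^ k := by positivity
    have hle : ENNReal.ofReal (f x ^ (-M)) ≤ ENNReal.ofReal ((s * 2 ^ k) ^ (-M)) :=
      ENNReal.ofReal_le_ofReal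
        (Real.rpow_le_rpow_of_nonpos hpos hk1 (neg_nonpos.mpr hM))
    refine le_trans ?_ (ENNReal.le_tsum k)
    refine le_trans hle (le_of_eq ?_)
    rw [Set.indicator_of_mem]
    exact hk2
  · rw [if_neg hx]
    simp

lemma dyadicSum_lintegral (f : α → ℝ) (n : ℕ) (M V s : ℝ) (hM : (n:ℝ) < M)
    (hV : 0 ≤ V) (hs : 1 ≤ s)
    (hmeas : ∀ r : ℝ, MeasurableSet {y | f y ≤ r})
    (hvol : ∀ r : ℝ, 1 ≤ r → μ {y | f y ≤ r} ≤ ENNReal.ofReal (V * r ^ (n:ℝ))) :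
    ∫⁻ x, dyadicSum f M s x ∂μ
      ≤ ENNReal.ofReal (V * (2 ^ ((n:ℝ)) * (1 - 2 ^ ((n:ℝ) - M))⁻¹) * s ^ ((n:ℝ) - M)) := by
  have h2 : (0:ℝ) < 2 := by norm_num
  have hgeom_lt : (2:ℝ) ^ ((n:ℝ) - M) < 1 :=
    Real.rpow_lt_one_of_one_lt_of_neg one_lt_two (by linarith)
  have hgeom_nonneg : (0:ℝ) ≤ (2:ℝ) ^ ((n:ℝ) - M) := Real.rpow_nonneg h2.le _
  have hterm_eq : ∀ k : ℕ, (s * 2 ^ k) ^ (-M) * (V * (s * 2 ^ (k + 1)) ^ (n:ℝ))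
      = (V * (2 ^ ((n:ℝ)) * s ^ ((n:ℝ) - M))) * ((2:ℝ) ^ ((n:ℝ) - M)) ^ k := by
    intro k
    have hs0 : (0:ℝ) < s := lt_of_lt_of_le one_pos hs
    rw [← Real.rpow_natCast 2 k, ← Real.rpow_natCast 2 (k + 1),
      ← Real.rpow_natCast ((2:ℝ) ^ ((n:ℝ) - M)) k]
    push_cast
    rw [Real.mul_rpow hs0.le (Real.rpow_nonneg h2.le _),
      Real.mul_rpow hs0.le (Real.rpow_nonneg h2.le _),
      ← Real.rpow_mul h2.le, ← Real.rpow_mul h2.le, ← Real.rpow_mul h2.le]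
    rw [show (((k:ℝ) + 1) * (n:ℝ)) = (n:ℝ) + (n:ℝ) * (k:ℝ) by ring]
    rw [Real.rpow_add h2]
    rw [show (((n:ℝ) - M) * (k:ℝ)) = (k:ℝ) * (-M) + (n:ℝ) * (k:ℝ) by ring]
    rw [Real.rpow_add h2]
    rw [show ((n:ℝ) - M) = (-M) + (n:ℝ) by ring]
    rw [Real.rpow_add hs0]
    ring
  unfold dyadicSum
  rw [lintegral_tsum fun k => (measurable_const.indicator (hmeas _)).aemeasurable]
  have hterm : ∀ k : ℕ,
      (∫⁻ x, ({y | f y ≤ s * 2 ^ (k + 1)}).indicator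
        (fun _ => ENNReal.ofReal ((s * 2 ^ k) ^ (-M))) x ∂μ)
      ≤ ENNReal.ofReal ((V * (2 ^ ((n:ℝ)) * s ^ ((n:ℝ) - M))) * ((2:ℝ) ^ ((n:ℝ) - M)) ^ k) := by
    intro k
    rw [lintegral_indicator_const (hmeas _)]
    have hr1 : (1:ℝ) ≤ s * 2 ^ (k + 1) := by
      have : (1:ℝ) ≤ 2 ^ (k + 1) := one_le_pow₀ one_le_two
      nlinarith
    calc ENNReal.ofReal ((s * 2 ^ k) ^ (-M)) * μ {y | f y ≤ s * 2 ^ (k + 1)}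
        ≤ ENNReal.ofReal ((s * 2 ^ k) ^ (-M))
            * ENNReal.ofReal (V * (s * 2 ^ (k + 1)) ^ (n:ℝ)) :=
          mul_le_mul_right (hvol _ hr1) _
      _ = ENNReal.ofReal ((s * 2 ^ k) ^ (-M) * (V * (s * 2 ^ (k + 1)) ^ (n:ℝ))) :=
          (ENNReal.ofReal_mul (Real.rpow_nonneg (by positivity) _)).symm
      _ = ENNReal.ofReal ((V * (2 ^ ((n:ℝ)) * s ^ ((n:ℝ) - M))) * ((2:ℝ) ^ ((n:ℝ) - M)) ^ k) := by
          rw [hterm_eq k]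
  refine le_trans (ENNReal.tsum_le_tsum hterm) (le_of_eq ?_)
  have hA : (0:ℝ) ≤ V * (2 ^ ((n:ℝ)) * s ^ ((n:ℝ) - M)) := by
    have := Real.rpow_nonneg h2.le ((n:ℝ))
    have := Real.rpow_nonneg (le_trans zero_le_one hs) ((n:ℝ) - M)
    positivity
  rw [← ENNReal.ofReal_tsum_of_nonneg
    (fun k => mul_nonneg hA (pow_nonneg hgeom_nonneg k))
    ((summable_geometric_of_lt_one hgeom_nonneg hgeom_lt).mul_left _)]
  rw [tsum_mul_left, tsum_geometric_of_lt_one hgeom_nonneg hgeom_lt]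
  congr 1
  ring

end dyadic

/-- wave-packet overlap estimate: if φ, φ' are adapted with decay order
M > 2n to disjoint rectangles R, R' with every side of R' at least as long as the
corresponding side of R, then |⟨φ,φ'⟩| ≲_{M,n} (|R|/|R'|)^{1/2}·(1+ρ_{R'}(x))^{n−M}
for every x ∈ R (hence with the infimum over R). -/
theorem stmt_14 (n : ℕ) (hn : 1 ≤ n) (M : ℝ) (hM : 2 * n < M) :
    ∃ C : ℝ, 0 < C ∧
      ∀ (c c' w w' : Fin n → ℝ), (∀ i, 0 < w i) → (∀ i, w i ≤ w' i) →
      ∀ φ φ' : EuclideanSpace ℝ (Fin n) → ℂ,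
        (∀ x, ‖φ x‖ ≤ (∏ i, (2 * w i)) ^ (-(1 : ℝ) / 2) * (1 + rhoRect c w x) ^ (-M)) →
        (∀ x, ‖φ' x‖ ≤ (∏ i, (2 * w' i)) ^ (-(1 : ℝ) / 2) * (1 + rhoRect c' w' x) ^ (-M)) →
        Disjoint {x : EuclideanSpace ℝ (Fin n) | ∀ i, |x i - c i| ≤ w i}
          {x : EuclideanSpace ℝ (Fin n) | ∀ i, |x i - c' i| ≤ w' i} →
        ∀ x₀ : EuclideanSpace ℝ (Fin n), (∀ i, |x₀ i - c i| ≤ w i) →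
          ‖∫ x, φ x * (starRingEnd ℂ) (φ' x)‖
            ≤ C * Real.sqrt ((∏ i, (2 * w i)) / ∏ i, (2 * w' i))
              * (1 + rhoRect c' w' x₀) ^ ((n : ℝ) - M) := by
  have hn' : Nonempty (Fin n) := ⟨⟨0, hn⟩⟩
  have hn1 : (1:ℝ) ≤ (n:ℝ) := by exact_mod_cast hn
  have hnM : (n:ℝ) < M := by
    have : (2:ℝ) * n < M := by exact_mod_cast hM
    nlinarith
  have hM0 : (0:ℝ) < M := by linarith
  have hnM' : (n:ℝ) - M < 0 := by linarith
  have h2 : (0:ℝ) < 2 := by norm_num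
  have h2nM : (2:ℝ) ^ ((n:ℝ) - M) < 1 :=
    Real.rpow_lt_one_of_one_lt_of_neg one_lt_two hnM'
  set C₀ : ℝ := 2 ^ ((n:ℝ)) * (1 - 2 ^ ((n:ℝ) - M))⁻¹ with hC₀
  have hC₀pos : 0 < C₀ := by
    apply mul_pos (Real.rpow_pos_of_pos h2 _)
    rw [inv_pos]
    linarith
  refine ⟨2 * C₀ * 2 ^ (M - (n:ℝ)), by positivity, ?_⟩
  intro c c' w w' hw hww' φ φ' hφ hφ' _hdisj x₀ hx₀
  have hw' : ∀ i, 0 < w' i := fun i => lt_of_lt_of_le (hw i) (hww' i)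
  set V : ℝ := ∏ i, (2 * w i) with hV
  set V' : ℝ := ∏ i, (2 * w' i) with hV'
  have hVpos : 0 < V := Finset.prod_pos fun i _ => by have := hw i; positivity
  have hV'pos : 0 < V' := Finset.prod_pos fun i _ => by have := hw' i; positivity
  set g : EuclideanSpace ℝ (Fin n) → ℝ := fun x => 1 + rhoRect c w x with hg
  set g' : EuclideanSpace ℝ (Fin n) → ℝ := fun x => 1 + rhoRect c' w' x with hg'
  have hg1 : ∀ x, 1 ≤ g x := fun x => by
    have := rhoRect_nonneg c w hw x; simp only [hg]; linarith
  have hg'1 : ∀ x, 1 ≤ g' x := fun x => by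
    have := rhoRect_nonneg c' w' hw' x; simp only [hg']; linarith
  set a : ℝ := g' x₀ with ha
  have ha1 : 1 ≤ a := hg'1 x₀
  set s : ℝ := max 1 (a / 2) with hs
  have hs1 : 1 ≤ s := le_max_left _ _
  have hsa : a / 2 ≤ s := le_max_right _ _
  have hs0 : 0 < s := lt_of_lt_of_le one_pos hs1
  -- geometric inequality
  have hgeom : ∀ x, a ≤ g x + g' x := by
    intro x
    have key : rhoRect c' w' x₀ ≤ 1 + rhoRect c w x + rhoRect c' w' x := by
      refine (rhoRect_le_iff c' w' hw' x₀ _).mpr fun i => ?_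
      have h1 : |x₀ i - c' i| ≤ |x₀ i - c i| + |x i - c i| + |x i - c' i| := by
        have := abs_sub_abs_le_abs_sub (x₀ i - c' i) 0
        calc |x₀ i - c' i| = |(x₀ i - c i) - (x i - c i) + (x i - c' i)| := by ring_nf
          _ ≤ |(x₀ i - c i) - (x i - c i)| + |x i - c' i| := abs_add_le _ _
          _ ≤ (|x₀ i - c i| + |x i - c i|) + |x i - c' i| := by
              exact add_le_add_left (abs_sub _ _) _
      have h2' : |x₀ i - c i| ≤ w' i := (hx₀ i).trans (hww' i)
      have h3 : |x i - c i| ≤ rhoRect c w x * w' i :=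
        (rhoRect_coord_le c w hw x i).trans
          (mul_le_mul_of_nonneg_left (hww' i) (rhoRect_nonneg c w hw x))
      have h4 : |x i - c' i| ≤ rhoRect c' w' x * w' i := rhoRect_coord_le c' w' hw' x i
      calc |x₀ i - c' i| ≤ w' i + rhoRect c w x * w' i + rhoRect c' w' x * w' i := by linarith
        _ = (1 + rhoRect c w x + rhoRect c' w' x) * w' i := by ring
    simp only [hg, hg', ha]
    linarith
  set K : ℝ := V ^ (-(1:ℝ)/2) * V' ^ (-(1:ℝ)/2) with hK
  have hK0 : 0 ≤ K := mul_nonneg (Real.rpow_nonneg hVpos.le _) (Real.rpow_nonneg hV'pos.le _)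
  have hφg : ∀ x, ‖φ x‖ ≤ V ^ (-(1:ℝ)/2) * g x ^ (-M) := by simp only [hg]; exact hφ
  have hφ'g : ∀ x, ‖φ' x‖ ≤ V' ^ (-(1:ℝ)/2) * g' x ^ (-M) := by simp only [hg']; exact hφ'
  have haeq : (1 + rhoRect c' w' x₀) = a := by rw [ha, hg']
  clear_value V V' g g' a s K
  -- measurability and volume hypotheses for g
  have hmeasg : ∀ r : ℝ, MeasurableSet {y : EuclideanSpace ℝ (Fin n) | g y ≤ r} := by
    intro r
    have := sublevel_measurable c w hw r
    simpa [hg] using this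
  have hvolg : ∀ r : ℝ, 1 ≤ r →
      volume {y : EuclideanSpace ℝ (Fin n) | g y ≤ r} ≤ ENNReal.ofReal (V * r ^ (n:ℝ)) := by
    intro r hr
    have := sublevel_volume c w hw r hr
    simpa [hg, hV] using this
  -- pointwise master bound
  have hmaster : ∀ x, ENNReal.ofReal ‖φ x * (starRingEnd ℂ) (φ' x)‖
      ≤ ENNReal.ofReal K *
        (dyadicSum g M s x + ENNReal.ofReal (s ^ ((n:ℝ) - M)) * dyadicSum g M 1 x) := by
    intro x
    have hnorm : ‖φ x * (starRingEnd ℂ) (φ' x)‖ = ‖φ x‖ * ‖φ' x‖ := by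
      rw [norm_mul, RCLike.norm_conj]
    have hb1 : ‖φ x‖ ≤ V ^ (-(1:ℝ)/2) * g x ^ (-M) := hφg x
    have hb2 : ‖φ' x‖ ≤ V' ^ (-(1:ℝ)/2) * g' x ^ (-M) := hφ'g x
    have hgpos : (0:ℝ) < g x := lt_of_lt_of_le one_pos (hg1 x)
    have hg'pos : (0:ℝ) < g' x := lt_of_lt_of_le one_pos (hg'1 x)
    have hstep1 : ‖φ x‖ * ‖φ' x‖ ≤ K * (g x ^ (-M) * g' x ^ (-M)) := by
      have := mul_le_mul hb1 hb2 (norm_nonneg _)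
        (mul_nonneg (Real.rpow_nonneg hVpos.le _) (Real.rpow_nonneg hgpos.le _))
      calc ‖φ x‖ * ‖φ' x‖ ≤ (V ^ (-(1:ℝ)/2) * g x ^ (-M)) * (V' ^ (-(1:ℝ)/2) * g' x ^ (-M)) :=
            this
        _ = K * (g x ^ (-M) * g' x ^ (-M)) := by rw [hK]; ring
    have hstep2 : g x ^ (-M) * g' x ^ (-M)
        ≤ (if s ≤ g x then g x ^ (-M) else 0) + s ^ ((n:ℝ) - M) * g x ^ (-M) := by
      have hcase : a / 2 ≤ g x ∨ a / 2 ≤ g' x := by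
        rcases le_or_gt (a / 2) (g x) with h | h
        · exact Or.inl h
        · right
          have hge := hgeom x
          by_contra hcon
          push_neg at hcon
          linarith
      have ht2 : (0:ℝ) ≤ s ^ ((n:ℝ) - M) * g x ^ (-M) :=
        mul_nonneg (Real.rpow_nonneg hs0.le _) (Real.rpow_nonneg hgpos.le _)
      rcases hcase with h | h
      · have hsg : s ≤ g x := by rw [hs]; exact max_le (hg1 x) h
        rw [if_pos hsg]
        have : g' x ^ (-M) ≤ 1 :=
          Real.rpow_le_one_of_one_le_of_nonpos (hg'1 x) (by linarith)
        nlinarith [Real.rpow_nonneg hgpos.le (-M)]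
      · have hsg' : s ≤ g' x := by rw [hs]; exact max_le (hg'1 x) h
        have hA : g' x ^ (-M) ≤ g' x ^ ((n:ℝ) - M) :=
          Real.rpow_le_rpow_of_exponent_le (hg'1 x) (by linarith)
        have hB : g' x ^ ((n:ℝ) - M) ≤ s ^ ((n:ℝ) - M) :=
          Real.rpow_le_rpow_of_nonpos hs0 hsg' hnM'.le
        have hC : g' x ^ (-M) ≤ s ^ ((n:ℝ) - M) := hA.trans hB
        have h0 : (0:ℝ) ≤ (if s ≤ g x then g x ^ (-M) else 0) := by
          split
          · exact Real.rpow_nonneg hgpos.le _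
          · exact le_rfl
        have hmul : g x ^ (-M) * g' x ^ (-M) ≤ g x ^ (-M) * s ^ ((n:ℝ) - M) :=
          mul_le_mul_of_nonneg_left hC (Real.rpow_nonneg hgpos.le _)
        calc g x ^ (-M) * g' x ^ (-M) ≤ g x ^ (-M) * s ^ ((n:ℝ) - M) := hmul
          _ = s ^ ((n:ℝ) - M) * g x ^ (-M) := mul_comm _ _
          _ ≤ _ := le_add_of_nonneg_left h0
    calc ENNReal.ofReal ‖φ x * (starRingEnd ℂ) (φ' x)‖
        ≤ ENNReal.ofReal (K * ((if s ≤ g x then g x ^ (-M) else 0)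
            + s ^ ((n:ℝ) - M) * g x ^ (-M))) := by
          apply ENNReal.ofReal_le_ofReal
          rw [hnorm]
          calc ‖φ x‖ * ‖φ' x‖ ≤ K * (g x ^ (-M) * g' x ^ (-M)) := hstep1
            _ ≤ _ := mul_le_mul_of_nonneg_left hstep2 hK0
      _ = ENNReal.ofReal K * (ENNReal.ofReal (if s ≤ g x then g x ^ (-M) else 0)
            + ENNReal.ofReal (s ^ ((n:ℝ) - M)) * ENNReal.ofReal (g x ^ (-M))) := by
          have e1 : (0:ℝ) ≤ (if s ≤ g x then g x ^ (-M) else 0) := by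
            split
            · exact Real.rpow_nonneg hgpos.le _
            · exact le_rfl
          have e2 : (0:ℝ) ≤ s ^ ((n:ℝ) - M) * g x ^ (-M) :=
            mul_nonneg (Real.rpow_nonneg hs0.le _) (Real.rpow_nonneg hgpos.le _)
          rw [ENNReal.ofReal_mul hK0, ENNReal.ofReal_add e1 e2,
            ENNReal.ofReal_mul (Real.rpow_nonneg hs0.le _)]
      _ ≤ _ := by
          apply mul_le_mul_right
          apply add_le_add
          · exact dyadicSum_pointwise g M s hs1 hM0.le x
          · apply mul_le_mul_right
            have := dyadicSum_pointwise g M 1 le_rfl hM0.le x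
            rw [if_pos (hg1 x)] at this
            exact this
  -- now integrate
  have hRHS0 : 0 ≤ 2 * C₀ * 2 ^ (M - (n:ℝ)) * Real.sqrt (V / V') * a ^ ((n:ℝ) - M) := by
    have := Real.sqrt_nonneg (V / V')
    have := Real.rpow_nonneg (le_trans zero_le_one ha1) ((n:ℝ) - M)
    positivity
  rw [haeq]
  refine le_trans (norm_integral_le_lintegral_norm _) ?_
  apply ENNReal.toReal_le_of_le_ofReal hRHS0
  have hint1 : ∫⁻ x, dyadicSum g M s x
      ≤ ENNReal.ofReal (V * C₀ * s ^ ((n:ℝ) - M)) := by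
    have := dyadicSum_lintegral volume g n M V s hnM hVpos.le hs1 hmeasg hvolg
    rwa [show V * (2 ^ ((n:ℝ)) * (1 - 2 ^ ((n:ℝ) - M))⁻¹) * s ^ ((n:ℝ) - M)
        = V * C₀ * s ^ ((n:ℝ) - M) by rw [hC₀]] at this
  have hint2 : ∫⁻ x, dyadicSum g M 1 x ≤ ENNReal.ofReal (V * C₀) := by
    have := dyadicSum_lintegral volume g n M V 1 hnM hVpos.le le_rfl hmeasg hvolg
    rwa [Real.one_rpow, mul_one, show V * (2 ^ ((n:ℝ)) * (1 - 2 ^ ((n:ℝ) - M))⁻¹)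
        = V * C₀ by rw [hC₀]] at this
  calc ∫⁻ x, ENNReal.ofReal ‖φ x * (starRingEnd ℂ) (φ' x)‖
      ≤ ∫⁻ x, ENNReal.ofReal K *
          (dyadicSum g M s x + ENNReal.ofReal (s ^ ((n:ℝ) - M)) * dyadicSum g M 1 x) :=
        lintegral_mono hmaster
    _ = ENNReal.ofReal K * ((∫⁻ x, dyadicSum g M s x)
          + ENNReal.ofReal (s ^ ((n:ℝ) - M)) * ∫⁻ x, dyadicSum g M 1 x) := by
        rw [lintegral_const_mul' _ _ ENNReal.ofReal_ne_top,
          lintegral_add_left (dyadicSum_measurable g M s hmeasg),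
          lintegral_const_mul' _ _ ENNReal.ofReal_ne_top]
    _ ≤ ENNReal.ofReal K * (ENNReal.ofReal (V * C₀ * s ^ ((n:ℝ) - M))
          + ENNReal.ofReal (s ^ ((n:ℝ) - M)) * ENNReal.ofReal (V * C₀)) :=
        mul_le_mul_right (add_le_add hint1 (mul_le_mul_right hint2 _)) _
    _ = ENNReal.ofReal (K * (V * C₀ * s ^ ((n:ℝ) - M) + s ^ ((n:ℝ) - M) * (V * C₀))) := by
        rw [← ENNReal.ofReal_mul (Real.rpow_nonneg hs0.le _), ← ENNReal.ofReal_add,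
          ← ENNReal.ofReal_mul hK0]
        · positivity
        · positivity
    _ ≤ ENNReal.ofReal (2 * C₀ * 2 ^ (M - (n:ℝ)) * Real.sqrt (V / V') * a ^ ((n:ℝ) - M)) := by
        apply ENNReal.ofReal_le_ofReal
        have hKV : K * V = Real.sqrt (V / V') := by
          have h5 : V ^ (-(1:ℝ)/2) * V ^ (1:ℝ) = V ^ ((1:ℝ)/2) := by
            rw [← Real.rpow_add hVpos]; norm_num
          have h6 : V ^ (1:ℝ) = V := Real.rpow_one V
          calc K * V = V ^ (-(1:ℝ)/2) * V ^ (1:ℝ) * V' ^ (-(1:ℝ)/2) := by rw [hK, h6]; ring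
            _ = V ^ ((1:ℝ)/2) * V' ^ (-(1:ℝ)/2) := by rw [h5]
            _ = V ^ ((1:ℝ)/2) / V' ^ ((1:ℝ)/2) := by
                rw [show (-(1:ℝ)/2) = -((1:ℝ)/2) by norm_num, Real.rpow_neg hV'pos.le]
                exact (div_eq_mul_inv _ _).symm
            _ = (V / V') ^ ((1:ℝ)/2) := (Real.div_rpow hVpos.le hV'pos.le _).symm
            _ = Real.sqrt (V / V') := (Real.sqrt_eq_rpow _).symm
        have hsbound : s ^ ((n:ℝ) - M) ≤ 2 ^ (M - (n:ℝ)) * a ^ ((n:ℝ) - M) := by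
          have ha0 : (0:ℝ) < a := lt_of_lt_of_le one_pos ha1
          have h1 : s ^ ((n:ℝ) - M) ≤ (a / 2) ^ ((n:ℝ) - M) :=
            Real.rpow_le_rpow_of_nonpos (by positivity) hsa hnM'.le
          have h2' : (a / 2) ^ ((n:ℝ) - M) = a ^ ((n:ℝ) - M) / 2 ^ ((n:ℝ) - M) :=
            Real.div_rpow ha0.le h2.le _
          have h3 : (2:ℝ) ^ (M - (n:ℝ)) = (2 ^ ((n:ℝ) - M))⁻¹ := by
            rw [show (M - (n:ℝ)) = -((n:ℝ) - M) by ring, Real.rpow_neg h2.le]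
          rw [h3]
          rw [h2'] at h1
          rw [div_eq_mul_inv] at h1
          linarith [h1]
        calc K * (V * C₀ * s ^ ((n:ℝ) - M) + s ^ ((n:ℝ) - M) * (V * C₀))
            = 2 * C₀ * (K * V) * s ^ ((n:ℝ) - M) := by ring
          _ = 2 * C₀ * Real.sqrt (V / V') * s ^ ((n:ℝ) - M) := by rw [hKV]
          _ ≤ 2 * C₀ * Real.sqrt (V / V') * (2 ^ (M - (n:ℝ)) * a ^ ((n:ℝ) - M)) := by
              apply mul_le_mul_of_nonneg_left hsbound
              positivity
          _ = 2 * C₀ * 2 ^ (M - (n:ℝ)) * Real.sqrt (V / V') * a ^ ((n:ℝ) - M) := by ring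
end
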